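/- arXiv:2405.03591 — 4 statements merged into one kernel-verified Lean document; each statement's English description precedes it below -/
import Mathlib

section
/- If all constants have trivial Z_p^*-component, i.e. c_i = (c̄_i, 1) for i = 1,…,m, then the spherical equation ∏_{i=1}^m z_i^{-1} c_i z_i = 1 over G_{p,n} has a solution if and only if there exist α_1,…,α_m ∈ Z_p^* such that ∑_{i=1}^m α_i^{-1}·c̄_i = 0 in Z_p^n. -/
/-- The group `G_{p,n} = Z_p^n ⋊ Z_p^*`: multiplication `(x,α)(y,β) = (x + α·y, α·β)`. -/
def Gmul {p n : ℕ} (a b : (Fin n → ZMod p) × (ZMod p)ˣ) :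
    (Fin n → ZMod p) × (ZMod p)ˣ :=
  (a.1 + ((a.2 : (ZMod p)ˣ) : ZMod p) • b.1, a.2 * b.2)

/-- The identity `(0,1)` of `G_{p,n}`. -/
def Gone (p n : ℕ) : (Fin n → ZMod p) × (ZMod p)ˣ := (0, 1)

/-- The inverse `(x,α)⁻¹ = (-α⁻¹·x, α⁻¹)` in `G_{p,n}`. -/
def Ginv {p n : ℕ} (a : (Fin n → ZMod p) × (ZMod p)ˣ) :
    (Fin n → ZMod p) × (ZMod p)ˣ :=
  (-(((a.2⁻¹ : (ZMod p)ˣ) : ZMod p)) • a.1, a.2⁻¹)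

/-- Conjugation `z⁻¹ c z` in `G_{p,n}`. -/
def Gconj {p n : ℕ} (z c : (Fin n → ZMod p) × (ZMod p)ˣ) :
    (Fin n → ZMod p) × (ZMod p)ˣ :=
  Gmul (Gmul (Ginv z) c) z

/-- The ordered product `f 0 * f 1 * ⋯ * f (m-1)` in `G_{p,n}`. -/
def Gprod {p n m : ℕ} (f : Fin m → (Fin n → ZMod p) × (ZMod p)ˣ) :
    (Fin n → ZMod p) × (ZMod p)ˣ :=
  (List.ofFn f).foldr Gmul (Gone p n)

lemma Gconj_triv {p n : ℕ} (z : (Fin n → ZMod p) × (ZMod p)ˣ) (c : Fin n → ZMod p) :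
    Gconj z (c, 1) = (((z.2⁻¹ : (ZMod p)ˣ) : ZMod p) • c, 1) := by
  simp only [Gconj, Gmul, Ginv, Prod.mk.injEq]
  constructor
  · simp only [mul_one, neg_smul]; abel
  · simp

lemma Gprod_triv {p n : ℕ} : ∀ (m : ℕ) (g : Fin m → Fin n → ZMod p),
    Gprod (fun i => ((g i, 1) : (Fin n → ZMod p) × (ZMod p)ˣ)) = (∑ i, g i, 1) := by
  intro m
  induction m with
  | zero => intro g; simp [Gprod, Gone]
  | succ k ih =>
      intro g
      have h := ih (fun i => g i.succ)
      simp only [Gprod, List.ofFn_succ, List.foldr_cons] at h ⊢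
      rw [h, Gmul]
      simp [Fin.sum_univ_succ]

/-- If all constants have trivial `Z_p^*`-component, `c_i = (c̄_i, 1)`, then the
spherical equation `∏ z_i⁻¹ c_i z_i = 1` over `G_{p,n}` has a solution iff there are
units `α_1,…,α_m` with `∑ α_i⁻¹ c̄_i = 0`. -/
theorem trivial_component_iff (p n m : ℕ) (hp : p.Prime) (hn : 1 ≤ n)
    (cb : Fin m → (Fin n → ZMod p)) :
    (∃ z : Fin m → (Fin n → ZMod p) × (ZMod p)ˣ,
        Gprod (fun i => Gconj (z i) (cb i, 1)) = Gone p n) ↔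
      ∃ α : Fin m → (ZMod p)ˣ,
        ∑ i, ((((α i)⁻¹ : (ZMod p)ˣ) : ZMod p)) • cb i = 0 := by
  constructor
  · rintro ⟨z, hz⟩
    refine ⟨fun i => (z i).2, ?_⟩
    have : Gprod (fun i => Gconj (z i) (cb i, 1)) =
        (∑ i, (((z i).2⁻¹ : (ZMod p)ˣ) : ZMod p) • cb i, 1) := by
      simp only [Gconj_triv]
      exact Gprod_triv m _
    rw [this] at hz
    exact congrArg Prod.fst hz
  · rintro ⟨α, hα⟩
    refine ⟨fun i => (0, α i), ?_⟩
    simp only [Gconj_triv]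
    rw [Gprod_triv m _, Gone, hα]
end

section
/- Let v_1,…,v_m, v ∈ Z_3^n and set v' = v + ∑_{i=1}^m v_i. Define c_w = (w,1) ∈ G_{3,n} = Z_3^n ⋊ Z_3^* for w ∈ Z_3^n. Then there exist ε_1,…,ε_m ∈ {0,1} with ∑ ε_i·v_i = v if and only if the inhomogeneous spherical equation ∏_{i=1}^m z_i^{-1} c_{v_i} z_i = c_{v'} has a solution (z_1,…,z_m) ∈ G_{3,n}^m. -/
lemma conj_c {p n : ℕ} (z : (Fin n → ZMod p) × (ZMod p)ˣ) (w : Fin n → ZMod p) :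
    Gconj z (w, 1) = ((((z.2⁻¹ : (ZMod p)ˣ) : ZMod p)) • w, 1) := by
  unfold Gconj Gmul Ginv
  ext
  · simp [smul_add]
  · simp

lemma gprod_ones {p n m : ℕ} (w : Fin m → Fin n → ZMod p) :
    Gprod (fun i => ((w i : Fin n → ZMod p), (1 : (ZMod p)ˣ))) = (∑ i, w i, 1) := by
  induction m with
  | zero => simp [Gprod, Gone]
  | succ k ih =>
    have : Gprod (fun i : Fin (k+1) => (w i, (1:(ZMod p)ˣ)))
        = Gmul (w 0, 1) (Gprod (fun i : Fin k => (w i.succ, (1:(ZMod p)ˣ)))) := by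
      simp [Gprod, List.ofFn_succ]
    rw [this, ih]
    ext
    · simp [Gmul, Fin.sum_univ_succ]
    · simp [Gmul]

lemma unit_cases (u : (ZMod 3)ˣ) : (u : ZMod 3) = 1 ∨ (u : ZMod 3) = 2 := by
  revert u; decide

/-- The subset sum instance `(v_1,…,v_m,v)` over `Z_3^n` is positive iff the
inhomogeneous spherical equation `∏ z_i⁻¹ c_{v_i} z_i = c_{v'}` over
`G_{3,n}`, with `v' = v + ∑ v_i` and `c_w = (w,1)`, has a solution. -/
theorem ssp_iff_spherical (n m : ℕ) (v : Fin m → (Fin n → ZMod 3))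
    (v₀ : Fin n → ZMod 3) :
    (∃ ε : Fin m → ZMod 3, (∀ i, ε i = 0 ∨ ε i = 1) ∧ ∑ i, ε i • v i = v₀) ↔
    (∃ z : Fin m → (Fin n → ZMod 3) × (ZMod 3)ˣ,
      Gprod (fun i => Gconj (z i) (v i, 1)) = (v₀ + ∑ i, v i, 1)) := by
  constructor
  · rintro ⟨ε, hε, hsum⟩
    refine ⟨fun i => (0, (if ε i = 0 then 1 else -1 : (ZMod 3)ˣ)⁻¹), ?_⟩
    have h1 : ∀ i : Fin m,
        Gconj ((0, (if ε i = 0 then 1 else -1 : (ZMod 3)ˣ)⁻¹) :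
          (Fin n → ZMod 3) × (ZMod 3)ˣ) (v i, 1) = ((ε i + 1) • v i, 1) := by
      intro i
      rw [conj_c]
      rcases hε i with h | h <;> simp [h]
      rw [show ((1:ZMod 3)+1) = -1 from by decide, neg_smul, one_smul]
    simp only [h1]
    rw [gprod_ones]
    refine Prod.ext ?_ rfl
    simp only [add_smul, one_smul, Finset.sum_add_distrib, hsum]
  · rintro ⟨z, hz⟩
    simp only [conj_c] at hz
    rw [gprod_ones] at hz
    have hz1 : ∑ i, (((z i).2⁻¹ : (ZMod 3)ˣ) : ZMod 3) • v i = v₀ + ∑ i, v i :=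
      congrArg Prod.fst hz
    refine ⟨fun i => (((z i).2⁻¹ : (ZMod 3)ˣ) : ZMod 3) - 1, ?_, ?_⟩
    · intro i
      dsimp only
      rcases unit_cases ((z i).2⁻¹) with h | h <;> rw [h]
      · left; decide
      · right; decide
    · simp only [sub_smul, one_smul, Finset.sum_sub_distrib, hz1]
      abel
end

section
/- Let p be an odd prime, v_1,…,v_m, v ∈ Z_p^n, v' = v + ∑ v_i, and c_w = (w,1) ∈ G_{p,n}. Then there exist ε_1,…,ε_m ∈ {0,1} with ∑ ε_i·v_i = v if and only if the constrained equation ∏_{i=1}^m z_i^{-1} c_{v_i} z_i = c_{v'}, with each z_i required to lie in {(0,1), (0,2^{-1})}, has a solution. -/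
lemma Gprod_trans {p n m : ℕ} (w : Fin m → (Fin n → ZMod p)) :
    Gprod (fun i => (w i, (1 : (ZMod p)ˣ))) = (∑ i, w i, 1) := by
  induction m with
  | zero => simp [Gprod, Gone]
  | succ k ih =>
    have h : Gprod (fun i : Fin (k+1) => (w i, (1 : (ZMod p)ˣ))) =
        Gmul (w 0, 1) (Gprod (fun i : Fin k => (w i.succ, 1))) := by
      simp [Gprod, List.ofFn_succ]
    rw [h, ih]
    simp [Gmul, Fin.sum_univ_succ]

lemma Gconj_one {p n : ℕ} (v : Fin n → ZMod p) :
    Gconj ((0 : Fin n → ZMod p), (1 : (ZMod p)ˣ)) (v, 1) = (v, 1) := by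
  simp [Gconj, Gmul, Ginv]

lemma Gconj_u {p n : ℕ} (u : (ZMod p)ˣ) (v : Fin n → ZMod p) :
    Gconj ((0 : Fin n → ZMod p), u⁻¹) (v, 1) = ((u : ZMod p) • v, 1) := by
  simp [Gconj, Gmul, Ginv]

/-- For odd prime `p`: the subset sum instance `(v_1,…,v_m,v)` over `Z_p^n` is positive
iff the constrained inhomogeneous spherical equation `∏ z_i⁻¹ c_{v_i} z_i = c_{v'}`
with `z_i ∈ {(0,1),(0,2⁻¹)}` has a solution, where `v' = v + ∑ v_i`, `c_w = (w,1)`,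
and `u` is the unit `2` of `Z_p`. -/
theorem ssp_iff_constrained (p n m : ℕ) (hp : p.Prime) (hodd : Odd p)
    (u : (ZMod p)ˣ) (hu : (u : ZMod p) = 2)
    (v : Fin m → (Fin n → ZMod p)) (v₀ : Fin n → ZMod p) :
    (∃ ε : Fin m → ZMod p, (∀ i, ε i = 0 ∨ ε i = 1) ∧ ∑ i, ε i • v i = v₀) ↔
    (∃ z : Fin m → (Fin n → ZMod p) × (ZMod p)ˣ,
      (∀ i, z i = ((0 : Fin n → ZMod p), (1 : (ZMod p)ˣ)) ∨
            z i = ((0 : Fin n → ZMod p), u⁻¹)) ∧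
      Gprod (fun i => Gconj (z i) (v i, 1)) = (v₀ + ∑ i, v i, 1)) := by
  haveI : Fact p.Prime := ⟨hp⟩
  have h21 : (2 : ZMod p) ≠ 1 := by
    intro h
    have h1 : (1 : ZMod p) = 0 := by linear_combination h
    exact one_ne_zero h1
  constructor
  · rintro ⟨ε, hε, hsum⟩
    refine ⟨fun i => if ε i = 0 then ((0 : Fin n → ZMod p), (1 : (ZMod p)ˣ))
      else ((0 : Fin n → ZMod p), u⁻¹), fun i => ?_, ?_⟩
    · by_cases h : ε i = 0 <;> simp [h]
    · have hcon : (fun i => Gconj (if ε i = 0 then ((0 : Fin n → ZMod p), (1 : (ZMod p)ˣ))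
          else ((0 : Fin n → ZMod p), u⁻¹)) (v i, 1)) =
          fun i => (v i + ε i • v i, (1 : (ZMod p)ˣ)) := by
        funext i
        rcases hε i with h | h
        · simp [h, Gconj_one]
        · have hne : ε i ≠ 0 := by rw [h]; exact one_ne_zero
          rw [if_neg hne, Gconj_u, hu, h]
          simp [two_smul]
      rw [hcon, Gprod_trans]
      rw [Finset.sum_add_distrib, hsum, add_comm]
  · rintro ⟨z, hz, hprod⟩
    refine ⟨fun i => if z i = ((0 : Fin n → ZMod p), (1 : (ZMod p)ˣ)) then 0 else 1,
      fun i => ?_, ?_⟩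
    · by_cases h : z i = ((0 : Fin n → ZMod p), (1 : (ZMod p)ˣ)) <;> simp [h]
    · set ε : Fin m → ZMod p :=
        fun i => if z i = ((0 : Fin n → ZMod p), (1 : (ZMod p)ˣ)) then 0 else 1 with hεdef
      have hcon : (fun i => Gconj (z i) (v i, 1)) =
          fun i => (v i + ε i • v i, (1 : (ZMod p)ˣ)) := by
        funext i
        rcases hz i with h | h
        · have : ε i = 0 := by simp [hεdef, h]
          rw [h, Gconj_one, this]
          simp
        · have hune : u⁻¹ ≠ (1 : (ZMod p)ˣ) := by
            intro h1
            have : u = 1 := by simpa using congrArg (·⁻¹) h1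
            rw [this] at hu
            exact h21 hu.symm
          have hne : z i ≠ ((0 : Fin n → ZMod p), (1 : (ZMod p)ˣ)) := by
            rw [h]; intro hcontra
            exact hune (congrArg Prod.snd hcontra)
          have hε1 : ε i = 1 := by simp [hεdef, hne]
          rw [h, Gconj_u, hu, hε1]
          simp [two_smul]
      rw [hcon, Gprod_trans] at hprod
      have h1 : ∑ i, (v i + ε i • v i) = v₀ + ∑ i, v i :=
        congrArg Prod.fst hprod
      rw [Finset.sum_add_distrib, add_comm] at h1
      exact add_right_cancel h1
end

section
/- Let p be an odd prime, let A ∈ Z_p^{n×m} have columns v_1,…,v_m, let y ∈ Z_p^n, and set v' = y + ∑_{i=1}^m v_i and c_w = (w,1) ∈ G_{p,n}. Then for x = (x_1,…,x_m) ∈ {0,1}^m: A·x = y in Z_p^n if and only if ∏_{i=1}^m (0,(x_i+1)^{-1})^{-1} · c_{v_i} · (0,(x_i+1)^{-1}) = c_{v'} in G_{p,n}. -/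

lemma Gprod_ones {p n m : ℕ} (g : Fin m → (Fin n → ZMod p)) :
    Gprod (fun i => ((g i, (1 : (ZMod p)ˣ)) : (Fin n → ZMod p) × (ZMod p)ˣ))
      = (∑ i, g i, 1) := by
  induction m with
  | zero => simp [Gprod, Gone]
  | succ k ih =>
    rw [Fin.sum_univ_succ]
    have : Gprod (fun i : Fin (k+1) => ((g i, (1 : (ZMod p)ˣ)) : (Fin n → ZMod p) × (ZMod p)ˣ))
        = Gmul (g 0, 1) (Gprod (fun i : Fin k => ((g i.succ, (1 : (ZMod p)ˣ)) : (Fin n → ZMod p) × (ZMod p)ˣ))) := by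
      simp [Gprod, List.ofFn_succ]
    rw [this, ih]
    simp [Gmul]

/-- Let `p` be an odd prime, `v_1,…,v_m` the columns of `A`, `y ∈ Z_p^n`,
`v' = y + ∑ v_i`, `c_w = (w,1)`. For `x ∈ {0,1}^m` (with `u_i` the unit `x_i + 1`):
`A·x = y` iff `∏ (0,(x_i+1)⁻¹)⁻¹ c_{v_i} (0,(x_i+1)⁻¹) = c_{v'}` in `G_{p,n}`. -/
theorem isis_iff_constrained (p n m : ℕ) (hp : p.Prime) (hodd : Odd p)
    (v : Fin m → (Fin n → ZMod p)) (y : Fin n → ZMod p)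
    (x : Fin m → ZMod p) (hx : ∀ i, x i = 0 ∨ x i = 1)
    (u : Fin m → (ZMod p)ˣ) (hu : ∀ i, (u i : ZMod p) = x i + 1) :
    (∑ i, x i • v i = y) ↔
    Gprod (fun i => Gconj ((0 : Fin n → ZMod p), (u i)⁻¹) (v i, 1))
      = (y + ∑ i, v i, 1) := by
  have hc : ∀ i, Gconj ((0 : Fin n → ZMod p), (u i)⁻¹) (v i, 1)
      = (((u i : ZMod p) • v i : Fin n → ZMod p), (1 : (ZMod p)ˣ)) := by
    intro i
    simp [Gconj, Gmul, Ginv]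
  have h1 : Gprod (fun i => Gconj ((0 : Fin n → ZMod p), (u i)⁻¹) (v i, 1))
      = (∑ i, (u i : ZMod p) • v i, 1) := by
    rw [show (fun i => Gconj ((0 : Fin n → ZMod p), (u i)⁻¹) (v i, 1))
      = fun i => (((u i : ZMod p) • v i : Fin n → ZMod p), (1 : (ZMod p)ˣ)) from funext hc]
    exact Gprod_ones _
  rw [h1, Prod.ext_iff]
  simp only [and_true]
  have : ∑ i, (u i : ZMod p) • v i = (∑ i, x i • v i) + ∑ i, v i := by
    rw [← Finset.sum_add_distrib]
    refine Finset.sum_congr rfl fun i _ => ?_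
    rw [hu i, add_smul, one_smul]
  rw [this]
  constructor
  · intro h; rw [h]
  · intro h; exact add_right_cancel h
end
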